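/- Let X be a reduced ACM zero-dimensional subscheme of P^1 × P^1, with points P_{ij} = R_i ∩ C_j in a grid of (1,0)-lines R_0,…,R_a and (0,1)-lines C_0,…,C_b. Then c_{ij} = 1 if and only if P_{ij} ∈ X, where (c_{ij}) is the first difference of the Hilbert function of X. -/

import Mathlib

/- Common setup: the bigraded coordinate ring of Q = P^1 x P^1, bigraded Hilbert
functions, point ideals, separators, minimal free resolutions, staircase (Ferrers)
configurations of reduced ACM schemes. -/

open MvPolynomial

attribute [local instance] Classical.propDecidable

noncomputable section

/-- Variables of the bihomogeneous coordinate ring: `inl` = x₀,x₁ and `inr` = y₀,y₁. -/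
abbrev BiVar := Fin 2 ⊕ Fin 2

/-- The bigraded coordinate ring S = k[x₀,x₁;y₀,y₁] of Q = P¹ × P¹. -/
abbrev S2 (k : Type) [Field k] := MvPolynomial BiVar k

/-- The bigrading weights: x-variables have degree (1,0), y-variables degree (0,1). -/
def bw : BiVar → ℕ × ℕ := Sum.elim (fun _ => (1, 0)) (fun _ => (0, 1))

/-- P¹ over k. -/
abbrev P1 (k : Type) [Field k] := Projectivization k (Fin 2 → k)

/-- A point of Q = P¹ × P¹. -/
abbrev PtQ (k : Type) [Field k] := P1 k × P1 k

variable {k : Type} [Field k]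

/-- Evaluation of a polynomial at (a representative of) a point of Q. -/
def evalPt (x : PtQ k) : S2 k →+* k :=
  MvPolynomial.eval (Sum.elim x.1.rep x.2.rep)

/-- An ideal is bihomogeneous if it contains all bihomogeneous components of its members. -/
def IsBihom (I : Ideal (S2 k)) : Prop :=
  ∀ f ∈ I, ∀ d : ℕ × ℕ, weightedHomogeneousComponent bw d f ∈ I

/-- Saturation with respect to the irrelevant ideal (x₀,x₁) ∩ (y₀,y₁). -/
def IsSat (I : Ideal (S2 k)) : Prop :=
  ∀ f : S2 k, (∀ i j : Fin 2, X (Sum.inl i) * X (Sum.inr j) * f ∈ I) → f ∈ I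

/-- The zero locus in Q of a (bihomogeneous) ideal. -/
def biZeroLocus (I : Ideal (S2 k)) : Set (PtQ k) :=
  {x | ∀ f ∈ I, ∀ d : ℕ × ℕ, evalPt x (weightedHomogeneousComponent bw d f) = 0}

/-- The (saturated) ideal of a point of Q: generated by the bihomogeneous forms vanishing there. -/
def pointIdeal (x : PtQ k) : Ideal (S2 k) :=
  Ideal.span {f | (∃ d : ℕ × ℕ, IsWeightedHomogeneous bw f d) ∧ evalPt x f = 0}

/-- The saturated ideal of a reduced finite set of points of Q. -/
def idealOfFinset (Z : Finset (PtQ k)) : Ideal (S2 k) :=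
  ⨅ x ∈ Z, pointIdeal x

/-- The bigraded piece of degree d of an ideal, as a k-subspace. -/
def Ipiece (I : Ideal (S2 k)) (d : ℕ × ℕ) : Submodule k (S2 k) :=
  (Submodule.restrictScalars k I) ⊓ weightedHomogeneousSubmodule k bw d

/-- The bigraded Hilbert function M_X(i,j) = dim S_{i,j} - dim (I_X)_{i,j}. -/
def hilb (I : Ideal (S2 k)) (i j : ℕ) : ℕ :=
  Module.finrank k (weightedHomogeneousSubmodule k bw ((i, j) : ℕ × ℕ)) -
    Module.finrank k (Ipiece I (i, j))

/-- The Hilbert function extended by 0 to negative arguments. -/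
def HM (I : Ideal (S2 k)) (i j : ℤ) : ℤ :=
  if 0 ≤ i ∧ 0 ≤ j then (hilb I i.toNat j.toNat : ℤ) else 0

/-- The first difference ΔM_X of the Hilbert function. -/
def ΔH (I : Ideal (S2 k)) (i j : ℤ) : ℤ :=
  HM I i j - HM I (i - 1) j - HM I i (j - 1) + HM I (i - 1) (j - 1)

/-- Index of a nonzero coordinate of a nonzero vector in k². -/
def pivot (v : Fin 2 → k) : Fin 2 := if v 0 ≠ 0 then 0 else 1

/-- The other index. -/
def off : Fin 2 → Fin 2 := fun s => if s = 0 then 1 else 0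

/-- Dehomogenization onto the affine chart around a point of Q. -/
def chartHom (x : PtQ k) : S2 k →+* MvPolynomial (Fin 2) k :=
  (aeval (R := k) (Sum.elim
    (fun i : Fin 2 => if i = pivot x.1.rep then 1 else X 0)
    (fun j : Fin 2 => if j = pivot x.2.rep then 1 else X 1))).toRingHom

/-- The affine coordinates of a point of Q in its chart. -/
def affPt (x : PtQ k) : Fin 2 → k := fun u =>
  if u = 0 then x.1.rep (off (pivot x.1.rep)) / x.1.rep (pivot x.1.rep)
  else x.2.rep (off (pivot x.2.rep)) / x.2.rep (pivot x.2.rep)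

/-- The multiplicity m_X(P): the length of the local ring O_{X,P}, computed in the
affine chart as the stable value of dim A/(I_aff + m_P^n). -/
def mult (I : Ideal (S2 k)) (x : PtQ k) : ℕ :=
  ⨆ n : ℕ, Module.finrank k
    (MvPolynomial (Fin 2) k ⧸
      (Ideal.map (chartHom x) I ⊔ (RingHom.ker (MvPolynomial.eval (affPt x))) ^ n))

/-- X is arithmetically Cohen–Macaulay: depth S(X) = 2, i.e. there is a regular
sequence of length two on S/I_X inside the maximal ideal of S. -/
def IsACM (I : Ideal (S2 k)) : Prop :=
  ∃ f g : S2 k, constantCoeff f = 0 ∧ constantCoeff g = 0 ∧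
    (∀ h : S2 k, f * h ∈ I → h ∈ I) ∧
    (∀ h : S2 k, g * h ∈ I ⊔ Ideal.span {f} → h ∈ I ⊔ Ideal.span {f})

/-- f is a separator of degree d for the point x relative to the residual scheme Z:
f is bihomogeneous of degree d, vanishes on Z, and is nonzero at x. -/
def IsSeparator (IZ : Ideal (S2 k)) (x : PtQ k) (f : S2 k) (d : ℕ × ℕ) : Prop :=
  IsWeightedHomogeneous bw f d ∧ f ∈ IZ ∧ evalPt x f ≠ 0

/-- The set of separating degrees for x relative to Z. -/
def SepDegs (IZ : Ideal (S2 k)) (x : PtQ k) : Set (ℕ × ℕ) :=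
  {d | ∃ f, IsSeparator IZ x f d}

/-- d is a minimal separating degree (componentwise partial order). -/
def IsMinSepDeg (IZ : Ideal (S2 k)) (x : PtQ k) (d : ℕ × ℕ) : Prop :=
  d ∈ SepDegs IZ x ∧ ∀ e ∈ SepDegs IZ x, ¬ e < d

/-- d is the unique minimal separating degree. -/
def UniqueMinSepDeg (IZ : Ideal (S2 k)) (x : PtQ k) (d : ℕ × ℕ) : Prop :=
  IsMinSepDeg IZ x d ∧ ∀ e, IsMinSepDeg IZ x e → e = d

/-- f splits into a product of forms of degree (1,0) and (0,1), i.e. the curve f = 0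
is a union of (1,0)- and (0,1)-lines. -/
def SplitsIntoLines (f : S2 k) : Prop :=
  ∃ L : Multiset (S2 k),
    (∀ l ∈ L, IsWeightedHomogeneous bw l ((1 : ℕ), (0 : ℕ)) ∨
      IsWeightedHomogeneous bw l ((0 : ℕ), (1 : ℕ))) ∧ f = L.prod

/-- `IsMFR3 I d0 d1 d2` : the ideal I has minimal bigraded free resolution
0 → ⊕ S(-d2 i) → ⊕ S(-d1 i) → ⊕ S(-d0 i) → I → 0, given by a minimal generating
system of the listed degrees, a first-syzygy matrix A and a second-syzygy matrix B,
homogeneous of the appropriate degrees, with entries in the maximal ideal (minimality). -/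
def IsMFR3 {ι₀ ι₁ ι₂ : Type} [Fintype ι₀] [Fintype ι₁] [Fintype ι₂]
    (I : Ideal (S2 k)) (d0 : ι₀ → ℕ × ℕ) (d1 : ι₁ → ℕ × ℕ) (d2 : ι₂ → ℕ × ℕ) : Prop :=
  ∃ (g : ι₀ → S2 k) (A : ι₁ → ι₀ → S2 k) (B : ι₂ → ι₁ → S2 k),
    (∀ i, IsWeightedHomogeneous bw (g i) (d0 i)) ∧
    I = Ideal.span (Set.range g) ∧
    (∀ i j, A i j = 0 ∨ (d0 j ≤ d1 i ∧
      IsWeightedHomogeneous bw (A i j) ((d1 i).1 - (d0 j).1, (d1 i).2 - (d0 j).2))) ∧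
    (∀ i j, constantCoeff (A i j) = 0) ∧
    (∀ i, ∑ j, A i j * g j = 0) ∧
    (∀ v : ι₀ → S2 k, ∑ j, v j * g j = 0 →
      ∃ c : ι₁ → S2 k, ∀ j, v j = ∑ i, c i * A i j) ∧
    (∀ i j, B i j = 0 ∨ (d1 j ≤ d2 i ∧
      IsWeightedHomogeneous bw (B i j) ((d2 i).1 - (d1 j).1, (d2 i).2 - (d1 j).2))) ∧
    (∀ i j, constantCoeff (B i j) = 0) ∧
    (∀ i j, ∑ l, B i l * A l j = 0) ∧
    (∀ c : ι₁ → S2 k, (∀ j, ∑ i, c i * A i j = 0) →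
      ∃ e : ι₂ → S2 k, ∀ i, c i = ∑ l, e l * B l i) ∧
    (∀ e : ι₂ → S2 k, (∀ i, ∑ l, e l * B l i = 0) → e = 0)

/-- A minimal free resolution of length 2 (the ACM case). -/
def IsMFR2 {ι₀ ι₁ : Type} [Fintype ι₀] [Fintype ι₁]
    (I : Ideal (S2 k)) (d0 : ι₀ → ℕ × ℕ) (d1 : ι₁ → ℕ × ℕ) : Prop :=
  IsMFR3 I d0 d1 (fun e : Fin 0 => e.elim0)

/-- A reduced ACM zero-dimensional scheme in Q: points P_{ij} = R_i ∩ C_j indexed by a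
lower-closed (staircase/Ferrers) diagram D in a grid of distinct (1,0)-lines R_i and
(0,1)-lines C_j, each containing at least one point of X. -/
structure Staircase (k : Type) [Field k] where
  a : ℕ
  b : ℕ
  R : ℕ → P1 k
  C : ℕ → P1 k
  hR : ∀ i ≤ a, ∀ i' ≤ a, R i = R i' → i = i'
  hC : ∀ j ≤ b, ∀ j' ≤ b, C j = C j' → j = j'
  D : Finset (ℕ × ℕ)
  bound : ∀ p ∈ D, p.1 ≤ a ∧ p.2 ≤ b
  lower : ∀ p ∈ D, ∀ q : ℕ × ℕ, q.1 ≤ p.1 → q.2 ≤ p.2 → q ∈ D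
  rows : ∀ i ≤ a, (i, 0) ∈ D
  cols : ∀ j ≤ b, (0, j) ∈ D

namespace Staircase

variable (T : Staircase k)

/-- The points of X. -/
def pts : Finset (PtQ k) := T.D.image (fun p => (T.R p.1, T.C p.2))

/-- The saturated ideal of X. -/
def ideal : Ideal (S2 k) := idealOfFinset T.pts

/-- #(X ∩ R_i). -/
def rowCount (i : ℕ) : ℕ := (T.D.filter (fun p => p.1 = i)).card

/-- #(X ∩ C_j). -/
def colCount (j : ℕ) : ℕ := (T.D.filter (fun p => p.2 = j)).card

/-- (r,s) is a corner for X: P_{r-1,s}, P_{r,s-1} ∈ X but P_{r,s} ∉ X. -/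
def IsCorner (r s : ℕ) : Prop :=
  0 < r ∧ 0 < s ∧ (r - 1, s) ∈ T.D ∧ (r, s - 1) ∈ T.D ∧ (r, s) ∉ T.D

/-- P_{ij} is an interior point of X: strictly dominated componentwise by some corner. -/
def Interior (i j : ℕ) : Prop :=
  (i, j) ∈ T.D ∧ ∃ r s, T.IsCorner r s ∧ i < r ∧ j < s

/-- The saturated ideal of X minus the points of X indexed by E. -/
def residual (E : Finset (ℕ × ℕ)) : Ideal (S2 k) :=
  idealOfFinset ((T.D \ E).image (fun p => (T.R p.1, T.C p.2)))

end Staircase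

/-- (i,j) is a vertex for a difference matrix c. -/
def IsVertexΔ (c : ℤ → ℤ → ℤ) (i j : ℤ) : Prop :=
  c (i - 1) j ≤ 0 ∧ c i (j - 1) ≤ 0 ∧ c (i - 1) (j - 1) = 1

/-- (i,j) is a corner for a difference matrix c. -/
def IsCornerΔ (c : ℤ → ℤ → ℤ) (i j : ℤ) : Prop :=
  c i j ≤ 0 ∧ c i (j - 1) = 1 ∧ c (i - 1) j = 1

end

/-! A bihomogeneous form of bidegree `(i, j)` that vanishes at `i + 1` points of a
`(0,1)`-line vanishes on the whole line, since its restriction is a binary form of degree `i`;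
likewise for `(1,0)`-lines. Because the diagram of `X` is lower-closed, a form of bidegree
`(i, j)` vanishing on the points `P_{uv}` of `X` with `u ≤ i`, `v ≤ j` therefore vanishes on all
of `X`. On the other hand, products of lines separate each of these points from the others in
bidegree `(i, j)`. Hence `M_X(i, j)` is the number of points `P_{uv} ∈ X` with `u ≤ i` and
`v ≤ j`, and its first difference is the indicator function of the diagram. -/

open Finset
open scoped LinearAlgebra.Projectivization

lemma Projectivization.eq_iff_cross_eq {K : Type*} [Field K] {P Q : ℙ K (Fin 2 → K)} :
    P = Q ↔ P.rep 0 * Q.rep 1 = P.rep 1 * Q.rep 0 := by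
  have h := (linearIndependent_pair_iff_ne (D := P) (D' := Q)).symm.trans
    ((Matrix.linearIndependent_rows_iff_isUnit (A := Matrix.of ![P.rep, Q.rep])).trans
      ((Matrix.isUnit_iff_isUnit_det _).trans isUnit_iff_ne_zero))
  rw [Matrix.det_fin_two] at h
  simpa [sub_eq_zero] using not_iff_not.mp h

lemma Polynomial.eval_homogenize_of_snd_eq_zero {K : Type*} [Field K] (p : Polynomial K) (n : ℕ)
    {x : Fin 2 → K} (hx : x 1 = 0) :
    MvPolynomial.eval x (p.homogenize n) = p.coeff n * x 0 ^ n := by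
  rw [Polynomial.homogenize, map_sum, Finset.sum_eq_single (n, 0)]
  · simp [MvPolynomial.eval_monomial, Finsupp.prod_fintype]
  · rintro ⟨a, b⟩ hab hne
    have hb : b ≠ 0 := by
      rintro rfl
      simp_all
    simp [MvPolynomial.eval_monomial, Finsupp.prod_fintype, hx, hb]
  · simp

namespace MvPolynomial

lemma eval_aeval {σ τ R : Type*} [CommSemiring R] (g : σ → MvPolynomial τ R) (x : τ → R)
    (p : MvPolynomial σ R) : eval x (aeval g p) = eval (fun s => eval x (g s)) p := by
  rw [aeval_def, algebraMap_eq, ← eval_assoc]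
  rfl

lemma IsWeightedHomogeneous.comp_addMonoidHom {σ R M N : Type*} [CommSemiring R]
    [AddCommMonoid M] [AddCommMonoid N] {w : σ → M} {φ : MvPolynomial σ R} {m : M}
    (F : M →+ N) (h : IsWeightedHomogeneous w φ m) :
    IsWeightedHomogeneous (F ∘ w) φ (F m) := by
  intro d hd
  rw [← h hd, Finsupp.weight_apply, Finsupp.weight_apply, map_finsuppSum]
  simp

lemma IsWeightedHomogeneous.isHomogeneous_aeval {σ τ R : Type*} [CommSemiring R] {w : σ → ℕ}
    {φ : MvPolynomial σ R} {m : ℕ} (h : IsWeightedHomogeneous w φ m)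
    (g : σ → MvPolynomial τ R) (hg : ∀ s, (g s).IsHomogeneous (w s)) :
    (aeval g φ).IsHomogeneous m := by
  rw [φ.as_sum, map_sum]
  refine IsHomogeneous.sum _ _ _ fun d hd => ?_
  rw [aeval_monomial, ← C_eq_algebraMap, ← h (mem_support_iff.mp hd), Finsupp.weight_apply]
  convert (IsHomogeneous.prod d.support _ _ fun s _ => (hg s).pow (d s)).C_mul (coeff d φ) using 1
  · rw [Finsupp.prod, mul_comm]
  · exact Finset.sum_congr rfl fun s _ => mul_comm _ _

lemma IsHomogeneous.natDegree_aeval_X_one_le {K : Type*} [Field K] {n : ℕ}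
    {q : MvPolynomial (Fin 2) K} (hq : q.IsHomogeneous n) :
    (MvPolynomial.aeval ![(Polynomial.X : Polynomial K), 1] q).natDegree ≤ n := by
  rw [q.as_sum, map_sum]
  refine Polynomial.natDegree_sum_le_of_forall_le _ _ fun m hm => ?_
  have hdeg : m 0 + m 1 = n := by
    simpa [Finsupp.weight_apply, Finsupp.sum_fintype, Fin.sum_univ_two] using
      hq (mem_support_iff.mp hm)
  rw [aeval_monomial, Finsupp.prod_fintype _ _ (fun _ => pow_zero _)]
  simp only [Fin.prod_univ_two, Matrix.cons_val_zero, Matrix.cons_val_one, one_pow, mul_one]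
  exact (Polynomial.natDegree_C_mul_X_pow_le _ _).trans (by omega)

lemma IsHomogeneous.eq_zero_of_eval_rep_eq_zero {K : Type*} [Field K] {n : ℕ}
    {q : MvPolynomial (Fin 2) K} (hq : q.IsHomogeneous n) {v : Fin (n + 1) → ℙ K (Fin 2 → K)}
    (hv : Function.Injective v) (hz : ∀ s, eval (v s).rep q = 0) : q = 0 := by
  open Projectivization in
  set p := MvPolynomial.aeval ![(Polynomial.X : Polynomial K), 1] q
  have hpq : p.homogenize n = q := Polynomial.homogenize_eq_of_isHomogeneous hq rfl
  have hp : p.natDegree ≤ n := hq.natDegree_aeval_X_one_le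
  suffices p = 0 by rw [← hpq, this, Polynomial.homogenize_zero]
  have hroot : ∀ s, (v s).rep 1 ≠ 0 → p.eval ((v s).rep 0 / (v s).rep 1) = 0 := fun s hs => by
    have := hz s
    rw [← hpq, Polynomial.eval_homogenize hp _ hs] at this
    simpa [hs] using this
  have hinj : ∀ s t, (v s).rep 1 ≠ 0 → (v t).rep 1 ≠ 0 →
      (v s).rep 0 / (v s).rep 1 = (v t).rep 0 / (v t).rep 1 → s = t := fun s t hs ht h => by
    refine hv (eq_iff_cross_eq.mpr ?_)
    rw [div_eq_div_iff hs ht] at h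
    linear_combination h
  by_cases hinf : ∃ s₀, (v s₀).rep 1 = 0
  · obtain ⟨s₀, hs₀⟩ := hinf
    have hfin : ∀ s, s ≠ s₀ → (v s).rep 1 ≠ 0 := fun s hs h =>
      hs (hv (eq_iff_cross_eq.mpr (by rw [h, hs₀]; ring)))
    -- the point at infinity kills the coefficient of `X ^ n`; the other `n` points are roots
    have hcoeff : p.coeff n = 0 := by
      have h0 : (v s₀).rep 0 ≠ 0 := fun h =>
        rep_nonzero (v s₀) (_root_.funext fun i => by fin_cases i <;> simp [h, hs₀])
      have := hz s₀
      rw [← hpq, Polynomial.eval_homogenize_of_snd_eq_zero _ _ hs₀] at this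
      simpa [h0] using this
    by_contra hp0
    have hlt : ¬ p.natDegree < n := fun hlt => hp0 <|
      Polynomial.eq_zero_of_natDegree_lt_card_of_eval_eq_zero p
        (f := fun s : {s // s ≠ s₀} => (v s).rep 0 / (v s).rep 1)
        (fun s t h => Subtype.ext (hinj s t (hfin s s.2) (hfin t t.2) h))
        (fun s => hroot s (hfin s s.2)) (by simpa using hlt)
    have : p.natDegree = n := by omega
    exact hp0 (Polynomial.leadingCoeff_eq_zero.mp (by rw [Polynomial.leadingCoeff, this, hcoeff]))
  · push Not at hinf
    exact Polynomial.eq_zero_of_natDegree_lt_card_of_eval_eq_zero p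
      (f := fun s => (v s).rep 0 / (v s).rep 1)
      (fun s t h => hinj s t (hinf s) (hinf t) h) (fun s => hroot s (hinf s)) (by simpa using hp)

end MvPolynomial

lemma Submodule.finrank_sub_finrank_ker_inf {K V U : Type*} [DivisionRing K] [AddCommGroup V]
    [Module K V] [AddCommGroup U] [Module K U] (W : Submodule K V) [FiniteDimensional K W]
    (φ : V →ₗ[K] U) :
    Module.finrank K W - Module.finrank K ↥(LinearMap.ker φ ⊓ W) =
      Module.finrank K (W.map φ) := by
  have hker : Module.finrank K (LinearMap.ker (φ.domRestrict W)) =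
      Module.finrank K ↥(LinearMap.ker φ ⊓ W) := by
    rw [LinearMap.ker_domRestrict, ← (Submodule.comapSubtypeEquivOfLe inf_le_right).finrank_eq,
      Submodule.comap_inf, Submodule.comap_subtype_self, inf_top_eq]
  have := LinearMap.finrank_range_add_finrank_ker (φ.domRestrict W)
  rw [LinearMap.range_domRestrict] at this
  omega

lemma Submodule.map_eq_top_of_separating {K V ι : Type*} [DivisionRing K] [AddCommGroup V]
    [Module K V] [Fintype ι] [DecidableEq ι] (W : Submodule K V) (φ : V →ₗ[K] ι → K)
    (h : ∀ i, ∃ v ∈ W, φ v i ≠ 0 ∧ ∀ j, j ≠ i → φ v j = 0) : W.map φ = ⊤ := by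
  refine eq_top_iff'.mpr fun g => ?_
  rw [pi_eq_sum_univ g]
  refine Submodule.sum_mem _ fun i _ => Submodule.smul_mem _ _ ?_
  obtain ⟨v, hvW, hvi, hvj⟩ := h i
  convert Submodule.smul_mem _ (φ v i)⁻¹ (Submodule.mem_map_of_mem hvW) using 1
  funext j
  by_cases hij : i = j
  · subst hij
    simp [hvi]
  · simp [hij, hvj j (Ne.symm hij)]

noncomputable section

variable {k : Type} [Field k]

instance finiteDimensional_weightedHomogeneousSubmodule (d : ℕ × ℕ) :
    FiniteDimensional k (weightedHomogeneousSubmodule k bw d) := by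
  refine Submodule.finiteDimensional_of_le (S₂ := restrictTotalDegree BiVar k (d.1 + d.2))
    fun f hf => ?_
  have htot : (AddMonoidHom.fst ℕ ℕ + AddMonoidHom.snd ℕ ℕ) ∘ bw = 1 := by
    funext s
    cases s <;> rfl
  have hf' := (mem_weightedHomogeneousSubmodule _ _ _ _).mp hf
    |>.comp_addMonoidHom (AddMonoidHom.fst ℕ ℕ + AddMonoidHom.snd ℕ ℕ)
  rw [htot] at hf'
  exact (mem_restrictTotalDegree _ _ _).mpr (IsHomogeneous.totalDegree_le hf')

lemma rep_pivot_ne_zero (P : P1 k) : P.rep (pivot P.rep) ≠ 0 := by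
  unfold pivot
  split_ifs with h
  · exact h
  · intro h1
    exact P.rep_nonzero (funext fun t => by fin_cases t <;> simp_all)

def fixSnd (c : Fin 2 → k) : S2 k →ₐ[k] MvPolynomial (Fin 2) k :=
  aeval (Sum.elim X fun t => C (c t))

def fixFst (r : Fin 2 → k) : S2 k →ₐ[k] MvPolynomial (Fin 2) k :=
  aeval (Sum.elim (fun t => C (r t)) X)

lemma eval_fixSnd (c x : Fin 2 → k) (f : S2 k) : eval x (fixSnd c f) = eval (Sum.elim x c) f := by
  rw [fixSnd, eval_aeval]
  congr 2
  funext s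
  cases s <;> simp

lemma eval_fixFst (r y : Fin 2 → k) (f : S2 k) : eval y (fixFst r f) = eval (Sum.elim r y) f := by
  rw [fixFst, eval_aeval]
  congr 2
  funext s
  cases s <;> simp

lemma MvPolynomial.IsWeightedHomogeneous.isHomogeneous_fixSnd {f : S2 k} {i j : ℕ}
    (hf : IsWeightedHomogeneous bw f (i, j)) (c : Fin 2 → k) : (fixSnd c f).IsHomogeneous i :=
  (hf.comp_addMonoidHom (AddMonoidHom.fst ℕ ℕ)).isHomogeneous_aeval _ fun s => by
    cases s
    · exact isHomogeneous_X _ _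
    · exact isHomogeneous_C _ _

lemma MvPolynomial.IsWeightedHomogeneous.isHomogeneous_fixFst {f : S2 k} {i j : ℕ}
    (hf : IsWeightedHomogeneous bw f (i, j)) (r : Fin 2 → k) : (fixFst r f).IsHomogeneous j :=
  (hf.comp_addMonoidHom (AddMonoidHom.snd ℕ ℕ)).isHomogeneous_aeval _ fun s => by
    cases s
    · exact isHomogeneous_C _ _
    · exact isHomogeneous_X _ _

lemma evalPt_eq_zero_of_forall_fst {f : S2 k} {i j : ℕ} (hf : IsWeightedHomogeneous bw f (i, j))
    {v : Fin (i + 1) → P1 k} (hv : Function.Injective v) {Q : P1 k}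
    (h : ∀ s, evalPt (v s, Q) f = 0) (P : P1 k) : evalPt (P, Q) f = 0 := by
  have h0 : fixSnd Q.rep f = 0 :=
    (hf.isHomogeneous_fixSnd Q.rep).eq_zero_of_eval_rep_eq_zero hv fun s => by
      rw [eval_fixSnd]
      exact h s
  simpa [evalPt, eval_fixSnd] using congrArg (eval P.rep) h0

lemma evalPt_eq_zero_of_forall_snd {f : S2 k} {i j : ℕ} (hf : IsWeightedHomogeneous bw f (i, j))
    {v : Fin (j + 1) → P1 k} (hv : Function.Injective v) {P : P1 k}
    (h : ∀ s, evalPt (P, v s) f = 0) (Q : P1 k) : evalPt (P, Q) f = 0 := by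
  have h0 : fixFst P.rep f = 0 :=
    (hf.isHomogeneous_fixFst P.rep).eq_zero_of_eval_rep_eq_zero hv fun s => by
      rw [eval_fixFst]
      exact h s
  simpa [evalPt, eval_fixFst] using congrArg (eval Q.rep) h0

def lineFst (Q : P1 k) : S2 k :=
  C (Q.rep 1) * X (Sum.inl 0) - C (Q.rep 0) * X (Sum.inl 1)

def lineSnd (Q : P1 k) : S2 k :=
  C (Q.rep 1) * X (Sum.inr 0) - C (Q.rep 0) * X (Sum.inr 1)

lemma isWeightedHomogeneous_lineFst (Q : P1 k) : IsWeightedHomogeneous bw (lineFst Q) (1, 0) :=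
  ((isWeightedHomogeneous_X k bw _).C_mul _).sub ((isWeightedHomogeneous_X k bw _).C_mul _)

lemma isWeightedHomogeneous_lineSnd (Q : P1 k) : IsWeightedHomogeneous bw (lineSnd Q) (0, 1) :=
  ((isWeightedHomogeneous_X k bw _).C_mul _).sub ((isWeightedHomogeneous_X k bw _).C_mul _)

lemma evalPt_lineFst_eq_zero_iff (Q : P1 k) (x : PtQ k) : evalPt x (lineFst Q) = 0 ↔ x.1 = Q := by
  rw [Projectivization.eq_iff_cross_eq]
  simp only [evalPt, lineFst, map_sub, map_mul, eval_C, eval_X, Sum.elim_inl]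
  constructor <;> intro h <;> linear_combination h

lemma evalPt_lineSnd_eq_zero_iff (Q : P1 k) (x : PtQ k) : evalPt x (lineSnd Q) = 0 ↔ x.2 = Q := by
  rw [Projectivization.eq_iff_cross_eq]
  simp only [evalPt, lineSnd, map_sub, map_mul, eval_C, eval_X, Sum.elim_inr]
  constructor <;> intro h <;> linear_combination h

lemma mem_idealOfFinset_iff {Z : Finset (PtQ k)} {f : S2 k} {d : ℕ × ℕ}
    (hf : IsWeightedHomogeneous bw f d) :
    f ∈ idealOfFinset Z ↔ ∀ x ∈ Z, evalPt x f = 0 := by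
  simp only [idealOfFinset, Submodule.mem_iInf]
  exact forall₂_congr fun x _ =>
    ⟨fun hx => Ideal.span_le.mpr (fun g hg => RingHom.mem_ker.mpr hg.2) hx,
      fun hx => Ideal.subset_span ⟨⟨d, hf⟩, hx⟩⟩

lemma exists_isSeparator {Z : Finset (PtQ k)} {x : PtQ k} {A B : Finset (P1 k)} {i j : ℕ}
    (hA : #A ≤ i) (hB : #B ≤ j) (hZ : ∀ y ∈ Z, y.1 ∈ A ∨ y.2 ∈ B)
    (hxA : x.1 ∉ A) (hxB : x.2 ∉ B) :
    ∃ f, IsSeparator (idealOfFinset Z) x f (i, j) := by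
  set f := (∏ Q ∈ A, lineFst Q) * (∏ Q ∈ B, lineSnd Q) *
    X (Sum.inl (pivot x.1.rep)) ^ (i - #A) * X (Sum.inr (pivot x.2.rep)) ^ (j - #B)
  have hf : IsWeightedHomogeneous bw f (i, j) := by
    have := (((IsWeightedHomogeneous.prod A _ _ fun Q _ => isWeightedHomogeneous_lineFst Q).mul
      (IsWeightedHomogeneous.prod B _ _ fun Q _ => isWeightedHomogeneous_lineSnd Q)).mul
      ((isWeightedHomogeneous_X k bw (Sum.inl (pivot x.1.rep))).pow (i - #A))).mul
      ((isWeightedHomogeneous_X k bw (Sum.inr (pivot x.2.rep))).pow (j - #B))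
    convert this using 1
    simp [bw, Prod.ext_iff]
    omega
  refine ⟨f, hf, (mem_idealOfFinset_iff hf).mpr fun y hy => ?_, ?_⟩
  · rcases hZ y hy with h | h
    · simp only [f, map_mul, map_prod, prod_eq_zero (f := fun Q => evalPt y (lineFst Q)) h
        ((evalPt_lineFst_eq_zero_iff _ y).mpr rfl), zero_mul]
    · simp only [f, map_mul, map_prod, prod_eq_zero (f := fun Q => evalPt y (lineSnd Q)) h
        ((evalPt_lineSnd_eq_zero_iff _ y).mpr rfl), zero_mul, mul_zero]
  · simp only [f, map_mul, map_prod, map_pow]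
    refine mul_ne_zero (mul_ne_zero (mul_ne_zero ?_ ?_) ?_) ?_
    · exact prod_ne_zero_iff.mpr fun Q hQ h =>
        hxA (((evalPt_lineFst_eq_zero_iff Q x).mp h) ▸ hQ)
    · exact prod_ne_zero_iff.mpr fun Q hQ h =>
        hxB (((evalPt_lineSnd_eq_zero_iff Q x).mp h) ▸ hQ)
    · exact pow_ne_zero _ (by simpa [evalPt] using rep_pivot_ne_zero x.1)
    · exact pow_ne_zero _ (by simpa [evalPt] using rep_pivot_ne_zero x.2)

def evalPtₗ (x : PtQ k) : S2 k →ₗ[k] k :=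
  (aeval (Sum.elim x.1.rep x.2.rep)).toLinearMap

namespace Staircase

variable (T : Staircase k)

def point (p : ℕ × ℕ) : PtQ k := (T.R p.1, T.C p.2)

def box (i j : ℕ) : Finset (ℕ × ℕ) := T.D.filter fun p => p.1 ≤ i ∧ p.2 ≤ j

def boxEval (i j : ℕ) : S2 k →ₗ[k] (T.box i j → k) :=
  LinearMap.pi fun p => evalPtₗ (T.point p)

lemma boxEval_apply (i j : ℕ) (f : S2 k) (p : T.box i j) :
    T.boxEval i j f p = evalPt (T.point p) f :=
  rfl

lemma injective_R {i : ℕ} (hi : i ≤ T.a) : Function.Injective fun s : Fin (i + 1) => T.R s :=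
  fun s t h => Fin.ext (T.hR _ (s.is_le.trans hi) _ (t.is_le.trans hi) h)

lemma injective_C {j : ℕ} (hj : j ≤ T.b) : Function.Injective fun s : Fin (j + 1) => T.C s :=
  fun s t h => Fin.ext (T.hC _ (s.is_le.trans hj) _ (t.is_le.trans hj) h)

lemma evalPt_point_eq_zero_of_forall_mem_box {f : S2 k} {i j : ℕ}
    (hf : IsWeightedHomogeneous bw f (i, j)) (h : ∀ p ∈ T.box i j, evalPt (T.point p) f = 0) :
    ∀ p ∈ T.D, evalPt (T.point p) f = 0 := by
  have hcol : ∀ p ∈ T.D, p.2 ≤ j → evalPt (T.point p) f = 0 := by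
    rintro ⟨u, v⟩ hp (hv : v ≤ j)
    rcases le_or_gt u i with hu | hu
    · exact h _ (mem_filter.mpr ⟨hp, hu, hv⟩)
    · have hrow : ∀ s : Fin (i + 1), ((s : ℕ), v) ∈ T.box i j := fun s =>
        mem_filter.mpr ⟨T.lower _ hp _ (by simp only; omega) le_rfl, s.is_le, hv⟩
      exact evalPt_eq_zero_of_forall_fst hf (T.injective_R (hu.le.trans (T.bound _ hp).1))
        (Q := T.C v) (fun s => h ((s : ℕ), v) (hrow s)) (T.R u)
  rintro ⟨u, v⟩ hp
  rcases le_or_gt v j with hv | hv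
  · exact hcol _ hp hv
  · exact evalPt_eq_zero_of_forall_snd hf (T.injective_C (hv.le.trans (T.bound _ hp).2))
      (P := T.R u) (fun s => hcol (u, s) (T.lower _ hp _ le_rfl (by simp only; omega)) s.is_le)
      (T.C v)

lemma Ipiece_ideal (i j : ℕ) :
    Ipiece T.ideal (i, j) =
      LinearMap.ker (T.boxEval i j) ⊓ weightedHomogeneousSubmodule k bw (i, j) := by
  ext f
  simp only [Ipiece, Submodule.mem_inf, Submodule.restrictScalars_mem, LinearMap.mem_ker,
    mem_weightedHomogeneousSubmodule]
  refine and_congr_left fun hf => ?_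
  rw [ideal, mem_idealOfFinset_iff hf, pts, forall_mem_image, funext_iff, Subtype.forall]
  simp only [boxEval_apply, Pi.zero_apply]
  exact ⟨fun h p hp => h (mem_filter.mp hp).1, T.evalPt_point_eq_zero_of_forall_mem_box hf⟩

lemma exists_isSeparator_of_mem_box {i j : ℕ} {p : ℕ × ℕ} (hp : p ∈ T.box i j) :
    ∃ f, IsSeparator (idealOfFinset (((T.box i j).erase p).image T.point)) (T.point p) f
      (i, j) := by
  obtain ⟨hpD, hpi, hpj⟩ := mem_filter.mp hp
  have hpa := (T.bound _ hpD).1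
  have hpb := (T.bound _ hpD).2
  refine exists_isSeparator (A := ((range (i + 1)).image T.R).erase (T.R p.1))
    (B := ((range (j + 1)).image T.C).erase (T.C p.2)) ?_ ?_ ?_
    (notMem_erase _ _) (notMem_erase _ _)
  · rw [card_erase_of_mem (mem_image_of_mem _ (mem_range.mpr (by omega)))]
    have := card_image_le (s := range (i + 1)) (f := T.R)
    rw [card_range] at this
    omega
  · rw [card_erase_of_mem (mem_image_of_mem _ (mem_range.mpr (by omega)))]
    have := card_image_le (s := range (j + 1)) (f := T.C)
    rw [card_range] at this
    omega
  · simp only [forall_mem_image, mem_erase, and_imp]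
    intro q hqp hq
    obtain ⟨hqD, hqi, hqj⟩ := mem_filter.mp hq
    have hqa := (T.bound _ hqD).1
    have hqb := (T.bound _ hqD).2
    by_cases h1 : q.1 = p.1
    · have h2 : q.2 ≠ p.2 := fun h2 => hqp (Prod.ext h1 h2)
      exact Or.inr ⟨fun h => h2 (T.hC _ hqb _ hpb h),
        mem_image_of_mem _ (mem_range.mpr (by omega))⟩
    · exact Or.inl ⟨fun h => h1 (T.hR _ hqa _ hpa h),
        mem_image_of_mem _ (mem_range.mpr (by omega))⟩

lemma map_boxEval_eq_top (i j : ℕ) :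
    (weightedHomogeneousSubmodule k bw (i, j)).map (T.boxEval i j) = ⊤ := by
  refine Submodule.map_eq_top_of_separating _ _ fun p => ?_
  obtain ⟨f, hf, hfZ, hfp⟩ := T.exists_isSeparator_of_mem_box p.2
  refine ⟨f, hf, hfp, fun q hq => (mem_idealOfFinset_iff hf).mp hfZ _ ?_⟩
  exact mem_image_of_mem _ (mem_erase.mpr ⟨Subtype.coe_injective.ne hq, q.2⟩)

lemma hilb_ideal (i j : ℕ) : hilb T.ideal i j = #(T.box i j) := by
  rw [hilb, Ipiece_ideal, Submodule.finrank_sub_finrank_ker_inf, map_boxEval_eq_top, finrank_top,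
    Module.finrank_fintype_fun_eq_card, Fintype.card_coe]

end Staircase

def lowerCount (D : Finset (ℕ × ℕ)) (i j : ℤ) : ℤ :=
  #(D.filter fun p => (p.1 : ℤ) ≤ i ∧ (p.2 : ℤ) ≤ j)

lemma lowerCount_sub_sub_add (D : Finset (ℕ × ℕ)) (i j : ℕ) :
    lowerCount D i j - lowerCount D (i - 1) j - lowerCount D i (j - 1) +
      lowerCount D (i - 1) (j - 1) = if (i, j) ∈ D then 1 else 0 := by
  simp only [lowerCount, card_filter, Nat.cast_sum, Nat.cast_ite, Nat.cast_one, Nat.cast_zero,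
    ← sum_sub_distrib, ← sum_add_distrib]
  rw [← sum_ite_eq' D (i, j) fun _ => (1 : ℤ)]
  refine sum_congr rfl fun ⟨a, b⟩ _ => ?_
  simp only [Prod.mk.injEq]
  split_ifs <;> omega

lemma Staircase.HM_ideal (T : Staircase k) (i j : ℤ) : HM T.ideal i j = lowerCount T.D i j := by
  rw [HM, lowerCount]
  split_ifs with h
  · rw [T.hilb_ideal, Staircase.box]
    congr 2
    exact filter_congr fun p _ => by omega
  · rw [filter_false_of_mem fun p _ => by omega, card_empty, Nat.cast_zero]

end

theorem stmt8_general (k : Type) [Field k] (T : Staircase k) :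
    ∀ i j : ℕ, ΔH T.ideal (i : ℤ) (j : ℤ) = 1 ↔ (i, j) ∈ T.D := by
  intro i j
  rw [ΔH, T.HM_ideal, T.HM_ideal, T.HM_ideal, T.HM_ideal, lowerCount_sub_sub_add]
  split_ifs with h <;> simp [h]

/-- for a reduced ACM scheme X arranged in a staircase grid,
c_{ij} = 1 iff P_{ij} ∈ X. -/
theorem stmt8 (k : Type) [Field k] [IsAlgClosed k] (T : Staircase k) :
    ∀ i j : ℕ, ΔH T.ideal (i : ℤ) (j : ℤ) = 1 ↔ (i, j) ∈ T.D :=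
  stmt8_general k T
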